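/- Let G = (V, E, w) be a finite weighted graph with distinct edge weights and let G' = (V, E \ S, w) for some S ⊆ E. Then the number of edges of the minimum spanning forest of G' that are not edges of the minimum spanning forest of G is at most |S|, i.e., |MSF(G') \ MSF(G)| ≤ |S|. -/

import Mathlib

/-!
If an edge `e = ab` of `MSF(G)` survives in `G' = G \ S` but is not in `MSF(G')`, the path from
`a` to `b` in `MSF(G')` leaves the component of `a` in `MSF(G) - e` through some edge `f`. Then
`MSF(G) - e + f` and `MSF(G') - f + e` are spanning forests of `G` and of `G'`, so
`w e ≤ w f ≤ w e`, and distinct weights force `e = f`, which is absurd. Hence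
`MSF(G) \ MSF(G') ⊆ S`. A spanning forest has `|V| - #components` edges and deleting edges can
only split components, so `|MSF(G')| ≤ |MSF(G)|` and therefore
`|MSF(G') \ MSF(G)| ≤ |MSF(G) \ MSF(G')| ≤ |S|`.
-/

open SimpleGraph

variable {V : Type*} [Fintype V]

/-- `F` is a minimum spanning forest of `G` w.r.t. the weight function `w`:
it is a set of edges of `G` forming an acyclic subgraph with the same
reachability relation as `G`, of minimum total weight among all such sets. -/
def IsMSF (G : SimpleGraph V) (w : Sym2 V → ℝ) (F : Set (Sym2 V)) : Prop :=
  F ⊆ G.edgeSet ∧ (SimpleGraph.fromEdgeSet F).IsAcyclic ∧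
  (∀ u v : V, G.Reachable u v ↔ (SimpleGraph.fromEdgeSet F).Reachable u v) ∧
  ∀ F' : Set (Sym2 V), F' ⊆ G.edgeSet → (SimpleGraph.fromEdgeSet F').IsAcyclic →
    (∀ u v : V, G.Reachable u v ↔ (SimpleGraph.fromEdgeSet F').Reachable u v) →
    ∑ᶠ e ∈ F, w e ≤ ∑ᶠ e ∈ F', w e

/-- `F` is a minimum spanning tree of the connected graph `G` w.r.t. `w`:
a set of edges of `G` forming a connected acyclic spanning subgraph,
of minimum total weight among all such sets. -/
def IsMST (G : SimpleGraph V) (w : Sym2 V → ℝ) (F : Set (Sym2 V)) : Prop :=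
  F ⊆ G.edgeSet ∧ (SimpleGraph.fromEdgeSet F).IsAcyclic ∧
  (SimpleGraph.fromEdgeSet F).Connected ∧
  ∀ F' : Set (Sym2 V), F' ⊆ G.edgeSet → (SimpleGraph.fromEdgeSet F').IsAcyclic →
    (SimpleGraph.fromEdgeSet F').Connected →
    ∑ᶠ e ∈ F, w e ≤ ∑ᶠ e ∈ F', w e

section

variable {α : Type*}

theorem Set.ncard_sdiff_le_ncard_sdiff_of_ncard_le {s t : Set α}
    (h : t.ncard ≤ s.ncard) (hs : s.Finite := by toFinite_tac) (ht : t.Finite := by toFinite_tac) :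
    (t \ s).ncard ≤ (s \ t).ncard := by
  have hs' := Set.ncard_inter_add_ncard_sdiff_eq_ncard s t hs
  have ht' := Set.ncard_inter_add_ncard_sdiff_eq_ncard t s ht
  rw [Set.inter_comm] at ht'
  omega

namespace SimpleGraph

section

variable {H : SimpleGraph α} {a b u v : α}

lemma Reachable.of_sup_edge (h : (H ⊔ edge a b).Reachable u v) :
    H.Reachable u v ∨ H.Reachable u a ∧ H.Reachable b v ∨ H.Reachable u b ∧ H.Reachable a v := by
  obtain ⟨p⟩ := h
  induction p with
  | nil => exact .inl .rfl
  | cons hadj _ ih =>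
    rcases hadj with hadj | hadj
    · have := hadj.reachable
      rcases ih with h | ⟨h₁, h₂⟩ | ⟨h₁, h₂⟩
      · exact .inl (this.trans h)
      · exact .inr (.inl ⟨this.trans h₁, h₂⟩)
      · exact .inr (.inr ⟨this.trans h₁, h₂⟩)
    · obtain ⟨⟨rfl, rfl⟩ | ⟨rfl, rfl⟩, -⟩ := (edge_adj ..).1 hadj
      · rcases ih with h | ⟨h₁, h₂⟩ | ⟨-, h₂⟩
        · exact .inr (.inl ⟨.rfl, h⟩)
        · exact .inl (h₁.symm.trans h₂)
        · exact .inl h₂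
      · rcases ih with h | ⟨-, h₂⟩ | ⟨h₁, h₂⟩
        · exact .inr (.inr ⟨.rfl, h⟩)
        · exact .inl h₂
        · exact .inl (h₁.symm.trans h₂)

lemma fromEdgeSet_insert_mk (s : Set (Sym2 α)) :
    fromEdgeSet (insert s(a, b) s) = fromEdgeSet s ⊔ edge a b := by
  rw [Set.insert_eq, Set.union_comm, fromEdgeSet_union, edge]

lemma fromEdgeSet_eq_sdiff_sup_edge {s : Set (Sym2 α)} (hab : s(a, b) ∈ s) :
    fromEdgeSet s = fromEdgeSet (s \ {s(a, b)}) ⊔ edge a b := by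
  rw [← fromEdgeSet_insert_mk, Set.insert_sdiff_singleton, Set.insert_eq_of_mem hab]

lemma not_reachable_fromEdgeSet_sdiff_of_isAcyclic {s : Set (Sym2 α)}
    (hs : (fromEdgeSet s).IsAcyclic) (hab : s(a, b) ∈ s) (hne : a ≠ b) :
    ¬ (fromEdgeSet (s \ {s(a, b)})).Reachable a b := by
  rw [fromEdgeSet_eq_sdiff_sup_edge hab, isAcyclic_sup_fromEdgeSet_iff] at hs
  exact fun h => (hs.2 h).elim hne (by simp [fromEdgeSet_adj])

lemma Walk.IsPath.exists_boundary_edge {p : H.Walk a b} (hp : p.IsPath) {A : Set α}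
    (ha : a ∈ A) (hb : b ∉ A) :
    ∃ x y, x ∈ A ∧ y ∉ A ∧ H.Adj x y ∧
      (H.deleteEdges {s(x, y)}).Reachable a x ∧ (H.deleteEdges {s(x, y)}).Reachable y b := by
  induction p with
  | nil => exact absurd ha hb
  | @cons u v _ hadj q ih =>
    rw [Walk.cons_isPath_iff] at hp
    by_cases hv : v ∈ A
    · obtain ⟨x, y, hx, hy, hxy, hax, hyb⟩ := ih hp.1 hv hb
      have hux : s(u, v) ≠ s(x, y) := by
        rintro h
        obtain ⟨-, rfl⟩ | ⟨rfl, -⟩ := Sym2.eq_iff.1 h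
        exacts [hy hv, hy ha]
      exact ⟨x, y, hx, hy, hxy, ((deleteEdges_adj ..).2 ⟨hadj, hux⟩).reachable.trans hax, hyb⟩
    · refine ⟨u, v, ha, hv, hadj, .rfl, ⟨q.toDeleteEdges _ fun e he hmem => ?_⟩⟩
      rw [Set.mem_singleton_iff] at hmem
      exact hp.2 (q.fst_mem_support_of_mem_edges (hmem ▸ he))

lemma card_connectedComponent_bot : Nat.card (⊥ : SimpleGraph α).ConnectedComponent = Nat.card α :=
  (Nat.card_eq_of_bijective _ ⟨fun _ _ h => reachable_bot.1 (ConnectedComponent.exact h),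
    Quot.mk_surjective⟩).symm

variable [Finite α]

lemma card_connectedComponent_sup_edge (h : ¬ H.Reachable a b) :
    Nat.card (H ⊔ edge a b).ConnectedComponent + 1 = Nat.card H.ConnectedComponent := by
  set φ := ConnectedComponent.map (Hom.ofLE (le_sup_left : H ≤ H ⊔ edge a b))
  have hinj : Set.InjOn φ {H.connectedComponentMk b}ᶜ := by
    intro c hc d hd hcd
    induction c using ConnectedComponent.ind with | _ u =>
    induction d using ConnectedComponent.ind with | _ v =>
    simp only [φ, ConnectedComponent.map_mk, Hom.coe_ofLE, id, ConnectedComponent.eq] at hcd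
    rcases hcd.of_sup_edge with huv | ⟨-, hbv⟩ | ⟨hub, -⟩
    · exact ConnectedComponent.sound huv
    · exact absurd (ConnectedComponent.sound hbv.symm) hd
    · exact absurd (ConnectedComponent.sound hub) hc
  have himage : φ '' {H.connectedComponentMk b}ᶜ = Set.univ := by
    refine Set.eq_univ_of_forall (ConnectedComponent.ind fun v => ?_)
    by_cases hv : H.connectedComponentMk v = H.connectedComponentMk b
    · refine ⟨H.connectedComponentMk a, by simpa using h, ?_⟩
      have hab : (H ⊔ edge a b).Adj a b :=
        .inr ((edge_adj ..).2 ⟨.inl ⟨rfl, rfl⟩, fun hab => h (hab ▸ .rfl)⟩)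
      simp only [φ, ConnectedComponent.map_mk, Hom.coe_ofLE, id, ConnectedComponent.eq]
      exact hab.reachable.trans ((ConnectedComponent.exact hv).symm.mono le_sup_left)
    · exact ⟨_, hv, rfl⟩
  rw [← Set.ncard_univ, ← himage, hinj.ncard_image, ← Set.ncard_univ, Set.compl_eq_univ_sdiff,
    Set.ncard_sdiff_singleton_add_one (Set.mem_univ _)]

lemma IsAcyclic.card_connectedComponent_add_ncard_edgeSet (hH : H.IsAcyclic) :
    Nat.card H.ConnectedComponent + H.edgeSet.ncard = Nat.card α := by
  induction hn : H.edgeSet.ncard generalizing H with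
  | zero =>
    obtain rfl : H = ⊥ := edgeSet_eq_empty.1 ((Set.ncard_eq_zero (Set.toFinite _)).1 hn)
    simp [card_connectedComponent_bot]
  | succ n ih =>
    obtain ⟨e, he⟩ := Set.nonempty_of_ncard_ne_zero (s := H.edgeSet) (by omega)
    induction e using Sym2.ind with | _ x y =>
    have hsplit : H.deleteEdges {s(x, y)} ⊔ edge x y = H :=
      sdiff_sup_cancel ((edge_le_iff H).2 (.inr he))
    have hbridge : ¬ (H.deleteEdges {s(x, y)}).Reachable x y :=
      isBridge_iff.1 (isAcyclic_iff_forall_isBridge.1 hH he)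
    have hcard := card_connectedComponent_sup_edge hbridge
    have hrest := ih (hH.anti (deleteEdges_le _))
      (by rw [edgeSet_deleteEdges, Set.ncard_sdiff_singleton_of_mem he, hn]; rfl)
    rw [hsplit] at hcard
    omega

end

def IsSpanningForest (G : SimpleGraph α) (F : Set (Sym2 α)) : Prop :=
  F ⊆ G.edgeSet ∧ (fromEdgeSet F).IsAcyclic ∧
    ∀ u v, G.Reachable u v ↔ (fromEdgeSet F).Reachable u v

namespace IsSpanningForest

variable {G : SimpleGraph α} {F : Set (Sym2 α)}

lemma exchange (hF : G.IsSpanningForest F) {a b x y : α} (hab : s(a, b) ∈ F)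
    (hxy : s(x, y) ∈ G.edgeSet) (hax : (fromEdgeSet (F \ {s(a, b)})).Reachable a x)
    (hyb : (fromEdgeSet (F \ {s(a, b)})).Reachable y b) :
    G.IsSpanningForest (insert s(x, y) (F \ {s(a, b)})) := by
  obtain ⟨hFG, hacyc, hreach⟩ := hF
  set T := fromEdgeSet (F \ {s(a, b)})
  have hne : a ≠ b := G.ne_of_adj (hFG hab)
  have hT : ¬ T.Reachable a b := not_reachable_fromEdgeSet_sdiff_of_isAcyclic hacyc hab hne
  have hsub : insert s(x, y) (F \ {s(a, b)}) ⊆ G.edgeSet :=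
    Set.insert_subset hxy (Set.sdiff_subset.trans hFG)
  unfold IsSpanningForest
  rw [fromEdgeSet_insert_mk]
  refine ⟨hsub, ?_, fun u v => ⟨fun huv => ?_, fun huv => ?_⟩⟩
  · refine (hacyc.anti (fromEdgeSet_mono Set.sdiff_subset)).sup_edge_of_not_reachable ?_
    exact fun hxy => hT (hax.trans (hxy.trans hyb))
  · have hle : T ≤ T ⊔ edge x y := le_sup_left
    have hxy' : (T ⊔ edge x y).Adj x y :=
      .inr ((edge_adj ..).2 ⟨.inl ⟨rfl, rfl⟩, G.ne_of_adj hxy⟩)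
    have hab' : (T ⊔ edge x y).Reachable a b :=
      (hax.mono hle).trans (hxy'.reachable.trans (hyb.mono hle))
    have huv' := fromEdgeSet_eq_sdiff_sup_edge hab ▸ (hreach u v).1 huv
    rcases huv'.of_sup_edge with huv | ⟨hua, hbv⟩ | ⟨hub, hav⟩
    · exact huv.mono hle
    · exact (hua.mono hle).trans (hab'.trans (hbv.mono hle))
    · exact (hub.mono hle).trans (hab'.symm.trans (hav.mono hle))
  · rw [← fromEdgeSet_insert_mk] at huv
    exact huv.mono ((fromEdgeSet_le G).2 (Set.sdiff_subset.trans hsub))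

lemma ncard_add_card_connectedComponent [Finite α] (hF : G.IsSpanningForest F) :
    F.ncard + Nat.card G.ConnectedComponent = Nat.card α := by
  obtain ⟨hFG, hacyc, hreach⟩ := hF
  have hedges : (fromEdgeSet F).edgeSet = F := by
    rw [edgeSet_fromEdgeSet, sdiff_eq_left, Set.disjoint_right]
    exact fun e hdiag he => G.not_isDiag_of_mem_edgeSet (hFG he) hdiag
  have hcard : Nat.card G.ConnectedComponent = Nat.card (fromEdgeSet F).ConnectedComponent := by
    have : G.Reachable = (fromEdgeSet F).Reachable := funext₂ fun u v => propext (hreach u v)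
    unfold ConnectedComponent
    rw [this]
  have := hacyc.card_connectedComponent_add_ncard_edgeSet
  rw [hedges] at this
  omega

lemma ncard_le_of_le [Finite α] {G' : SimpleGraph α} {F' : Set (Sym2 α)}
    (hF : G.IsSpanningForest F) (hF' : G'.IsSpanningForest F') (h : G' ≤ G) :
    F'.ncard ≤ F.ncard := by
  have := hF.ncard_add_card_connectedComponent
  have := hF'.ncard_add_card_connectedComponent
  have := ConnectedComponent.card_le_card_of_le h
  omega

end IsSpanningForest

end SimpleGraph

namespace IsMSF

variable {G : SimpleGraph α} {w : Sym2 α → ℝ} {F : Set (Sym2 α)}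

lemma isSpanningForest (hF : IsMSF G w F) : G.IsSpanningForest F :=
  ⟨hF.1, hF.2.1, hF.2.2.1⟩

lemma weight_le_of_exchange [Finite α] (hF : IsMSF G w F) {a b x y : α} (hab : s(a, b) ∈ F)
    (hxy : s(x, y) ∈ G.edgeSet) (hxyF : s(x, y) ∉ F)
    (hax : (fromEdgeSet (F \ {s(a, b)})).Reachable a x)
    (hyb : (fromEdgeSet (F \ {s(a, b)})).Reachable y b) :
    w s(a, b) ≤ w s(x, y) := by
  obtain ⟨hsub, hacyc, hreach⟩ := hF.isSpanningForest.exchange hab hxy hax hyb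
  have hmin := hF.2.2.2 _ hsub hacyc hreach
  rw [finsum_mem_insert _ (fun h => hxyF h.1) (Set.toFinite _)] at hmin
  have hsplit := finsum_mem_add_sdiff (f := w) (Set.singleton_subset_iff.2 hab) (Set.toFinite F)
  rw [finsum_mem_singleton] at hsplit
  linarith

theorem inter_edgeSet_subset [Finite α] (hinj : Set.InjOn w G.edgeSet) {G' : SimpleGraph α}
    {F' : Set (Sym2 α)} (hle : G' ≤ G) (hF : IsMSF G w F) (hF' : IsMSF G' w F') :
    F ∩ G'.edgeSet ⊆ F' := by
  classical
  rintro e ⟨heF, heG'⟩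
  by_contra heF'
  induction e using Sym2.ind with | _ a b =>
  set T := fromEdgeSet (F \ {s(a, b)})
  obtain ⟨hFG, hacyc, hreach⟩ := hF.isSpanningForest
  obtain ⟨hF'G', -, hreach'⟩ := hF'.isSpanningForest
  obtain ⟨p⟩ := (hreach' a b).1 (Adj.reachable heG')
  have hb : ¬ T.Reachable a b :=
    not_reachable_fromEdgeSet_sdiff_of_isAcyclic hacyc heF (G'.ne_of_adj heG')
  obtain ⟨x, y, hax, hya, hxy, hax', hyb'⟩ :=
    p.bypass_isPath.exists_boundary_edge (A := {v | T.Reachable a v}) .rfl hb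
  rw [deleteEdges_fromEdgeSet] at hax' hyb'
  have hxyF' : s(x, y) ∈ F' := ((fromEdgeSet_adj _).1 hxy).1
  have hxyG' : s(x, y) ∈ G'.edgeSet := hF'G' hxyF'
  have hxyF : s(x, y) ∉ F := fun h => hya (hax.trans (Adj.reachable
    ((fromEdgeSet_adj _).2 ⟨⟨h, fun h' => heF' (h' ▸ hxyF')⟩, hxy.ne⟩)))
  have hyb : T.Reachable y b := by
    have : (fromEdgeSet F).Reachable y b := (hreach y b).1 (((hreach' y b).2
      (hyb'.mono (fromEdgeSet_mono Set.sdiff_subset))).mono hle)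
    rcases (fromEdgeSet_eq_sdiff_sup_edge heF ▸ this).of_sup_edge with h | ⟨hya', -⟩ | ⟨h, -⟩
    exacts [h, absurd hya'.symm hya, h]
  have h₁ := hF.weight_le_of_exchange heF (edgeSet_mono hle hxyG') hxyF hax hyb
  have h₂ := hF'.weight_le_of_exchange hxyF' heG' heF' hax'.symm hyb'.symm
  exact heF' (hinj (edgeSet_mono hle hxyG') (hFG heF) (le_antisymm h₂ h₁) ▸ hxyF')

end IsMSF

end

theorem msf_deleteEdges_diff_card_le_general (G : SimpleGraph V) (w : Sym2 V → ℝ)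
    (hinj : Set.InjOn w G.edgeSet)
    (S : Set (Sym2 V))
    (F F' : Set (Sym2 V))
    (hF : IsMSF G w F) (hF' : IsMSF (G.deleteEdges S) w F') :
    (F' \ F).ncard ≤ S.ncard := by
  have hsub : F \ F' ⊆ S := fun e ⟨heF, heF'⟩ => by_contra fun heS =>
    heF' (hF.inter_edgeSet_subset hinj (G.deleteEdges_le S) hF'
      ⟨heF, (edgeSet_deleteEdges S).symm ▸ ⟨hF.1 heF, heS⟩⟩)
  calc (F' \ F).ncard ≤ (F \ F').ncard :=
        Set.ncard_sdiff_le_ncard_sdiff_of_ncard_le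
          (hF.isSpanningForest.ncard_le_of_le hF'.isSpanningForest (G.deleteEdges_le S))
    _ ≤ S.ncard := Set.ncard_le_ncard hsub

theorem msf_deleteEdges_diff_card_le (G : SimpleGraph V) (w : Sym2 V → ℝ)
    (hinj : Set.InjOn w G.edgeSet)
    (S : Set (Sym2 V)) (hS : S ⊆ G.edgeSet)
    (F F' : Set (Sym2 V))
    (hF : IsMSF G w F) (hF' : IsMSF (G.deleteEdges S) w F') :
    (F' \ F).ncard ≤ S.ncard :=
  msf_deleteEdges_diff_card_le_general G w hinj S F F' hF hF'
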